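/- There exists λ₀ ∈ (1, 2) such that for every λ ∈ (1, λ₀) and every point x ∈ ℝ³, there exist t ∈ [-ã(λ), ã(λ)] and n ∈ ℤ³ with ‖x - (t·v(λ) + n)‖ ≤ 5·(λ - 1). (In particular, the projection of J(λ) to the torus ℝ³/ℤ³ converges to the whole torus in the Hausdorff metric as λ → 1⁺.) -/

import Mathlib

/-!
Write `e = λ - 1`. Translates of `t ↦ t • v(λ)` by `ℤ³` hit the second coordinate of `x` exactly
along the progression `t ∈ e (x₁ + ℤ)` of step `e`, so it suffices to control the first and third
coordinates modulo `1` for some `t = b + m + r` with `b ≡ x₀ (mod 1)`, `m ∈ ℤ` and `r ∈ [0, e]`.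
The first coordinate is then off by `r`, while the third moves by `m (1 - 1/λ)` as `m` varies; since
`1 - 1/λ ≈ e`, the integers `|m| ≲ 1/(2e)` available inside `J(λ)` give a progression that is
`O(e)`-dense modulo `1`.
-/

/-- The center eigenvector `v(λ) = (1, 1/(λ-1), 1/λ)` in Euclidean `ℝ³`. -/
noncomputable def vvec (l : ℝ) : EuclideanSpace ℝ (Fin 3) :=
  (WithLp.equiv 2 (Fin 3 → ℝ)).symm ![1, 1 / (l - 1), 1 / l]

/-- The half-length `ã(λ) = (1/2)·⌊1/(λ-1)⌋`. -/
noncomputable def atil (l : ℝ) : ℝ := ((⌊1 / (l - 1)⌋ : ℝ)) / 2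

/-- An integer vector `n ∈ ℤ³` regarded as a point of Euclidean `ℝ³`. -/
noncomputable def intVec (n : Fin 3 → ℤ) : EuclideanSpace ℝ (Fin 3) :=
  (WithLp.equiv 2 (Fin 3 → ℝ)).symm fun i => (n i : ℝ)

open Set

lemma exists_abs_sub_int_mul_le_of_nonneg {g h : ℝ} (hh : 0 < h) (hg0 : 0 ≤ g) (hg : g ≤ 1 / 2)
    (M : ℕ) : ∃ m : ℤ, |(m : ℝ)| ≤ M ∧ |g - m * h| ≤ max h (1 / 2 - M * h) := by
  rcases le_or_gt g (M * h) with hgM | hgM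
  · have hfloor : 0 ≤ ⌊g / h⌋ := Int.floor_nonneg.2 (div_nonneg hg0 hh.le)
    have hlow : (⌊g / h⌋ : ℝ) * h ≤ g := (le_div_iff₀ hh).1 (Int.floor_le _)
    have hup : g < ((⌊g / h⌋ : ℝ) + 1) * h := (div_lt_iff₀ hh).1 (Int.lt_floor_add_one _)
    refine ⟨⌊g / h⌋, ?_, ?_⟩
    · rw [abs_of_nonneg (by exact_mod_cast hfloor)]
      exact_mod_cast Int.floor_le_floor (div_le_of_le_mul₀ hh.le M.cast_nonneg hgM) |>.trans
        (Int.floor_natCast M).le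
    · rw [abs_of_nonneg (by linarith)]
      exact le_max_of_le_left (by linarith)
  · refine ⟨M, by simp, ?_⟩
    rw [abs_of_nonneg (by push_cast; linarith)]
    exact le_max_of_le_right (by push_cast; linarith)

lemma exists_abs_sub_int_mul_le {g h : ℝ} (hh : 0 < h) (hg : |g| ≤ 1 / 2) (M : ℕ) :
    ∃ m : ℤ, |(m : ℝ)| ≤ M ∧ |g - m * h| ≤ max h (1 / 2 - M * h) := by
  rcases le_total 0 g with hg0 | hg0
  · exact exists_abs_sub_int_mul_le_of_nonneg hh hg0 (abs_le.1 hg).2 M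
  · obtain ⟨m, hm, hgm⟩ :=
      exists_abs_sub_int_mul_le_of_nonneg hh (neg_nonneg.2 hg0) (by linarith [abs_le.1 hg]) M
    refine ⟨-m, by simpa using hm, ?_⟩
    rw [← abs_neg]
    convert hgm using 2
    push_cast
    ring

lemma exists_abs_add_int_mul_sub_int_le {h : ℝ} (hh : 0 < h) (y : ℝ) (M : ℕ) :
    ∃ m P : ℤ, |(m : ℝ)| ≤ M ∧ |y + m * h - P| ≤ max h (1 / 2 - M * h) := by
  obtain ⟨m, hm, hym⟩ := exists_abs_sub_int_mul_le hh (g := round y - y)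
    (by rw [abs_sub_comm]; exact abs_sub_round y) M
  refine ⟨m, round y, hm, ?_⟩
  rw [← abs_neg]
  convert hym using 2
  ring

lemma exists_int_mul_add_mem_Icc {e : ℝ} (he : 0 < e) (y τ : ℝ) :
    ∃ k : ℤ, e * (y + k) ∈ Icc τ (τ + e) := by
  refine ⟨⌈τ / e - y⌉, ?_, ?_⟩
  · have := Int.le_ceil (τ / e - y)
    rw [← div_le_iff₀' he]
    linarith
  · have := Int.ceil_lt_add_one (τ / e - y)
    have : y + ⌈τ / e - y⌉ ≤ (τ + e) / e := by rw [add_div, div_self he.ne']; linarith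
    exact (le_div_iff₀' he).1 this

lemma exists_line_near_int_translate {e s : ℝ} (he : 0 < e) (hs0 : 0 ≤ s) (hs1 : s < 1) (M : ℕ)
    (x₀ x₁ x₂ : ℝ) :
    ∃ t : ℝ, ∃ n : Fin 3 → ℤ, |t| ≤ 1 / 2 + M + e ∧ |x₀ - (t + n 0)| ≤ e ∧
      x₁ - (t / e + n 1) = 0 ∧
      |x₂ - (t * s + n 2)| ≤ max (1 - s) (1 / 2 - M * (1 - s)) + e := by
  set b := x₀ - round x₀
  have hb : |b| ≤ 1 / 2 := abs_sub_round x₀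
  obtain ⟨m, P, hm, hmP⟩ :=
    exists_abs_add_int_mul_sub_int_le (h := 1 - s) (by linarith) (x₂ - x₀ + b * (1 - s)) M
  obtain ⟨k, hk⟩ := exists_int_mul_add_mem_Icc he x₁ (b + m)
  set t := e * (x₁ + k)
  set r := t - (b + m) with hr
  have hr0 : 0 ≤ r := by linarith [hk.1]
  have hre : r ≤ e := by linarith [hk.2]
  refine ⟨t, ![round x₀ - m, -k, round x₀ - m + P], ?_, ?_, ?_, ?_⟩
  · calc |t| = |b + m + r| := by rw [hr, add_sub_cancel]
      _ ≤ |b| + |(m : ℝ)| + |r| := abs_add_three _ _ _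
      _ ≤ 1 / 2 + M + e := by gcongr; exact abs_le.2 ⟨by linarith, hre⟩
  · show |x₀ - (t + ((round x₀ - m : ℤ) : ℝ))| ≤ e
    have : x₀ - (t + ((round x₀ - m : ℤ) : ℝ)) = -r := by push_cast; ring
    rwa [this, abs_neg, abs_of_nonneg hr0]
  · simp [t, he.ne']
  · have hE : x₂ - (t * s + ((round x₀ - m + P : ℤ) : ℝ))
        = (x₂ - x₀ + b * (1 - s) + m * (1 - s) - P) - r * s := by
      push_cast; ring
    have hrs : |r * s| ≤ e := by
      rw [abs_of_nonneg (by positivity)]; nlinarith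
    simp only [Fin.isValue, Matrix.cons_val]
    calc _ = |(x₂ - x₀ + b * (1 - s) + m * (1 - s) - P) - r * s| := by rw [hE]
      _ ≤ _ := abs_sub _ _
      _ ≤ _ := add_le_add hmP hrs

lemma norm_sub_smul_vvec_add_intVec (l t : ℝ) (x : EuclideanSpace ℝ (Fin 3)) (n : Fin 3 → ℤ) :
    ‖x - (t • vvec l + intVec n)‖ = √((x 0 - (t + n 0)) ^ 2 + (x 1 - (t / (l - 1) + n 1)) ^ 2
      + (x 2 - (t * (1 / l) + n 2)) ^ 2) := by
  simp [EuclideanSpace.norm_eq, vvec, intVec, Fin.sum_univ_three, div_eq_mul_inv]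

lemma sub_one_lt_two_mul_atil (l : ℝ) : 1 / (l - 1) - 1 < 2 * atil l := by
  rw [atil, mul_div_cancel₀ _ two_ne_zero]
  exact Int.sub_one_lt_floor _

lemma one_le_atil {l : ℝ} (hl : 1 < l) (hl' : l ≤ 3 / 2) : 1 ≤ atil l := by
  have hfloor : (2 : ℤ) ≤ ⌊1 / (l - 1)⌋ := Int.le_floor.2 (by
    rw [le_div_iff₀ (by linarith)]; push_cast; linarith)
  rw [atil, le_div_iff₀ two_pos]
  exact_mod_cast hfloor

lemma half_sub_mul_one_sub_inv_le {l M : ℝ} (hl : 1 < l) (hM : atil l - 2 < M) :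
    1 / 2 - M * (1 - 1 / l) ≤ 3 * (l - 1) := by
  have he : 0 < l - 1 := by linarith
  have hstep : 1 - 1 / l = (l - 1) / l := by field_simp
  have hinv : (l - 1) * (1 / (l - 1)) = 1 := mul_one_div_cancel he.ne'
  have hMe : (1 - 5 * (l - 1)) / 2 ≤ M * (l - 1) := by
    nlinarith [sub_one_lt_two_mul_atil l]
  rw [hstep, ← mul_div_assoc, sub_le_iff_le_add, ← sub_le_iff_le_add', le_div_iff₀ (by linarith)]
  nlinarith

/-- Density: there is `λ₀ ∈ (1,2)` such that for all `λ ∈ (1, λ₀)`, every point of `ℝ³` is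
within `5(λ-1)` of some integer translate of the segment `J(λ)`; hence the projection of
`J(λ)` to `ℝ³/ℤ³` converges to the whole torus in the Hausdorff metric as `λ → 1⁺`. -/
theorem Jseg_dense :
    ∃ L0 : ℝ, 1 < L0 ∧ L0 < 2 ∧ ∀ l : ℝ, 1 < l → l < L0 →
      ∀ x : EuclideanSpace ℝ (Fin 3),
        ∃ t ∈ Set.Icc (-atil l) (atil l), ∃ n : Fin 3 → ℤ,
          ‖x - (t • vvec l + intVec n)‖ ≤ 5 * (l - 1) := by
  refine ⟨3 / 2, by norm_num, by norm_num, fun l hl hl' x => ?_⟩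
  have he : 0 < l - 1 := by linarith
  have hatil : 1 ≤ atil l := one_le_atil hl hl'.le
  set M := ⌊atil l - 1⌋₊
  have hM : (M : ℝ) ≤ atil l - 1 := Nat.floor_le (by linarith)
  have hstep : max (1 - 1 / l) (1 / 2 - M * (1 - 1 / l)) ≤ 3 * (l - 1) :=
    max_le (by rw [one_sub_div (by linarith), div_le_iff₀ (by linarith)]; nlinarith)
      (half_sub_mul_one_sub_inv_le hl (by linarith [Nat.lt_floor_add_one (atil l - 1)]))
  obtain ⟨t, n, ht, h₀, h₁, h₂⟩ := exists_line_near_int_translate he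
    (s := 1 / l) (by positivity) ((div_lt_one (by linarith)).2 hl) M (x 0) (x 1) (x 2)
  refine ⟨t, abs_le.1 (by linarith), n, ?_⟩
  rw [norm_sub_smul_vvec_add_intVec, h₁, Real.sqrt_le_left (by linarith)]
  nlinarith [abs_le.1 h₀, abs_le.1 h₂]
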